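/- Let K be a spherically complete valued field of equi-characteristic 0, B ⊆ Kⁿ a ball, W̄ ⊆ RF(K)ⁿ a subspace with lift W ⊆ Kⁿ, π_W : B → W a lift of a projection π̄_{W̄}, and let X ⊆ Kⁿ satisfy: π_W(X ∩ B) = π_W(B), and for every x₁, x₂ ∈ X ∩ B one has rv⁽ⁿ⁾(x₁ − x₂) ∈ rv⁽ⁿ⁾(W). Then the riso-triviality space of X on B equals W̄: rtsp_B(X) = W̄. -/

import Mathlib

open scoped Classical

variable {K : Type*} [Field K]

/-- The sup-norm on `Kⁿ` induced by the valuation of a valuation subring `A ⊆ K`. -/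
noncomputable def vnrm (A : ValuationSubring K) {n : ℕ} (x : Fin n → K) :
    A.ValueGroup :=
  letI : OrderBot A.ValueGroup :=
    { bot := 0, bot_le := fun _ => zero_le' }
  Finset.univ.sup fun i => A.valuation (x i)

/-- A (valuative) ball in `K`. -/
def IsBall1 (A : ValuationSubring K) (B : Set K) : Prop :=
  B.Infinite ∧ ∀ x ∈ B, ∀ x' ∈ B, ∀ y : K,
    A.valuation (x - y) ≤ A.valuation (x - x') → y ∈ B

/-- A (valuative) ball in `Kⁿ`. -/
def IsBall (A : ValuationSubring K) {n : ℕ} (B : Set (Fin n → K)) : Prop :=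
  B.Infinite ∧ ∀ x ∈ B, ∀ x' ∈ B, ∀ y : Fin n → K,
    vnrm A (x - y) ≤ vnrm A (x - x') → y ∈ B

/-- `K` is spherically complete. -/
def SphericallyComplete (A : ValuationSubring K) : Prop :=
  ∀ C : Set (Set K), C.Nonempty → (∀ B ∈ C, IsBall1 A B) →
    IsChain (· ⊆ ·) C → (⋂₀ C).Nonempty

/-- A risometry from `B₁` onto `B₂`. -/
def IsRisometryOn (A : ValuationSubring K) {n : ℕ}
    (φ : (Fin n → K) → (Fin n → K)) (B₁ B₂ : Set (Fin n → K)) : Prop :=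
  Set.BijOn φ B₁ B₂ ∧
    ∀ x₁ ∈ B₁, ∀ x₂ ∈ B₁, x₁ ≠ x₂ →
      vnrm A (φ x₁ - φ x₂ - (x₁ - x₂)) < vnrm A (x₁ - x₂)

/-- Coordinatewise residue map `𝒪ⁿ → RFⁿ` (extended by `0` off the valuation ring). -/
noncomputable def resVec (A : ValuationSubring K) {n : ℕ} (x : Fin n → K) :
    Fin n → IsLocalRing.ResidueField A :=
  fun i => if h : x i ∈ A then IsLocalRing.residue A ⟨x i, h⟩ else 0

/-- `V ⊆ Kⁿ` is a lift of the residue subspace `Vbar ⊆ RFⁿ`: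
the image under `res` of `V ∩ 𝒪ⁿ` is exactly `Vbar`. -/
def IsLift (A : ValuationSubring K) {n : ℕ} (V : Submodule K (Fin n → K))
    (Vbar : Submodule (IsLocalRing.ResidueField A)
      (Fin n → IsLocalRing.ResidueField A)) : Prop :=
  {yb | ∃ x ∈ V, (∀ i, x i ∈ A) ∧ resVec A x = yb} = (Vbar : Set _)

/-- `χ` is `Vbar`-riso-trivial on `B`: there is a lift `V` of `Vbar` and a risometry
`φ : B → B` such that `χ ∘ φ` is `V`-translation invariant on `B`. -/
def RisoTrivialOn (A : ValuationSubring K) {n : ℕ} {S : Type*}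
    (χ : (Fin n → K) → S) (B : Set (Fin n → K))
    (Vbar : Submodule (IsLocalRing.ResidueField A)
      (Fin n → IsLocalRing.ResidueField A)) : Prop :=
  ∃ V : Submodule K (Fin n → K), IsLift A V Vbar ∧
    ∃ φ : (Fin n → K) → (Fin n → K), IsRisometryOn A φ B B ∧
      ∀ x ∈ B, ∀ x' ∈ B, x - x' ∈ V → χ (φ x) = χ (φ x')

/-- A set `X` is `Vbar`-riso-trivial on `B`: some risometry `φ : B → B` makes the
indicator function of `X` invariant under translations by a lift of `Vbar`. -/
def SetRisoTrivialOn (A : ValuationSubring K) {n : ℕ} (X : Set (Fin n → K))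
    (B : Set (Fin n → K))
    (Vbar : Submodule (IsLocalRing.ResidueField A)
      (Fin n → IsLocalRing.ResidueField A)) : Prop :=
  ∃ V : Submodule K (Fin n → K), IsLift A V Vbar ∧
    ∃ φ : (Fin n → K) → (Fin n → K), IsRisometryOn A φ B B ∧
      ∀ x ∈ B, ∀ x' ∈ B, x - x' ∈ V → (φ x ∈ X ↔ φ x' ∈ X)

/-- `rv⁽ⁿ⁾(a) = rv⁽ⁿ⁾(b)`: `a = b` or `|b − a| < |a|`. -/
def RvEq (A : ValuationSubring K) {n : ℕ} (a b : Fin n → K) : Prop :=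
  a = b ∨ vnrm A (b - a) < vnrm A a

namespace RisoAux

noncomputable instance (A : ValuationSubring K) : OrderBot A.ValueGroup :=
  { bot := 0, bot_le := fun _ => zero_le' }

variable (A : ValuationSubring K) {n : ℕ}

lemma vnrm_def (x : Fin n → K) :
    vnrm A x = Finset.univ.sup fun i => A.valuation (x i) := rfl

lemma vnrm_le_iff {x : Fin n → K} {r : A.ValueGroup} :
    vnrm A x ≤ r ↔ ∀ i, A.valuation (x i) ≤ r := by
  rw [vnrm_def]; simp [Finset.sup_le_iff]

lemma le_vnrm (x : Fin n → K) (i : Fin n) : A.valuation (x i) ≤ vnrm A x := by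
  rw [vnrm_def]
  exact Finset.le_sup (f := fun i => A.valuation (x i)) (Finset.mem_univ i)

lemma vnrm_zero : vnrm A (0 : Fin n → K) = 0 := by
  apply le_antisymm _ zero_le'
  rw [vnrm_le_iff]; intro i; simp

lemma vnrm_eq_zero_iff {x : Fin n → K} : vnrm A x = 0 ↔ x = 0 := by
  constructor
  · intro h
    funext i
    have := (le_vnrm A x i).trans h.le
    rw [le_zero_iff] at this
    simpa using (A.valuation.zero_iff).1 this
  · rintro rfl; exact vnrm_zero A

lemma vnrm_pos {x : Fin n → K} (h : x ≠ 0) : 0 < vnrm A x :=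
  zero_lt_iff.2 fun h0 => h ((vnrm_eq_zero_iff A).1 h0)

lemma vnrm_neg (x : Fin n → K) : vnrm A (-x) = vnrm A x := by
  rw [vnrm_def, vnrm_def]
  congr 1; funext i; simpa using A.valuation.map_neg (x i)

lemma vnrm_sub_rev (x y : Fin n → K) : vnrm A (x - y) = vnrm A (y - x) := by
  rw [← vnrm_neg A (x - y), neg_sub]

lemma vnrm_add_le (x y : Fin n → K) :
    vnrm A (x + y) ≤ max (vnrm A x) (vnrm A y) := by
  rw [vnrm_le_iff]
  intro i
  refine le_trans (A.valuation.map_add (x i) (y i)) ?_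
  exact max_le_max (le_vnrm A x i) (le_vnrm A y i)

lemma vnrm_sub_le (x y : Fin n → K) :
    vnrm A (x - y) ≤ max (vnrm A x) (vnrm A y) := by
  rw [sub_eq_add_neg]
  simpa [vnrm_neg] using vnrm_add_le A x (-y)

/-- ultrametric isosceles: if `|x - y| < |y|` then `|x| = |y|`. -/
lemma vnrm_isosceles {x y : Fin n → K} (h : vnrm A (x - y) < vnrm A y) :
    vnrm A x = vnrm A y := by
  apply le_antisymm
  · have : x = y + (x - y) := by ring
    rw [this]
    exact le_trans (vnrm_add_le A y (x - y)) (max_le le_rfl h.le)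
  · by_contra hlt
    push_neg at hlt
    have h1 : y = (y - x) + x := by ring
    have h2 : vnrm A y ≤ max (vnrm A (y - x)) (vnrm A x) := by
      conv_lhs => rw [h1]
      exact vnrm_add_le A (y - x) x
    rw [vnrm_sub_rev A y x] at h2
    exact absurd (lt_of_le_of_lt h2 (max_lt h hlt)) (lt_irrefl _)

lemma vnrm_smul (t : K) (x : Fin n → K) :
    vnrm A (t • x) = A.valuation t * vnrm A x := by
  rcases eq_or_ne t 0 with rfl | ht
  · simp [vnrm_zero]
  · rw [vnrm_def, vnrm_def]
    have := Finset.comp_sup_eq_sup_comp (s := (Finset.univ : Finset (Fin n)))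
      (f := fun i => A.valuation (x i)) (g := fun a => A.valuation t * a)
      (fun b c => by
        have : Monotone (fun a : A.ValueGroup => A.valuation t * a) :=
          fun a b hab => mul_le_mul_right hab _
        exact this.map_sup b c)
      (by show A.valuation t * (0 : A.ValueGroup) = 0; simp)
    rw [show (Finset.univ.sup fun i => A.valuation ((t • x) i))
        = Finset.univ.sup fun i => A.valuation t * A.valuation (x i) from
      Finset.sup_congr rfl (fun i _ => by simp [Pi.smul_apply, map_mul])]
    exact this.symm
  
lemma vnrm_le_one_iff {x : Fin n → K} : vnrm A x ≤ 1 ↔ ∀ i, x i ∈ A := by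
  rw [vnrm_le_iff]
  exact forall_congr' fun i => A.valuation_le_one_iff (x i)

lemma vnrm_lt_iff {x : Fin n → K} {r : A.ValueGroup} (hr : r ≠ 0) :
    vnrm A x < r ↔ ∀ i, A.valuation (x i) < r := by
  rw [vnrm_def, Finset.sup_lt_iff (by exact zero_lt_iff.2 hr)]
  simp

lemma resVec_apply {x : Fin n → K} (h : ∀ i, x i ∈ A) (i : Fin n) :
    resVec A x i = IsLocalRing.residue A ⟨x i, h i⟩ := dif_pos (h i)

lemma resVec_sub {x y : Fin n → K} (hx : ∀ i, x i ∈ A) (hy : ∀ i, y i ∈ A) :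
    resVec A (x - y) = resVec A x - resVec A y := by
  funext i
  have hxy : ∀ i, (x - y) i ∈ A := fun i => by
    simpa using sub_mem (hx i) (hy i)
  simp only [Pi.sub_apply]
  rw [resVec_apply A hxy, resVec_apply A hx, resVec_apply A hy, ← map_sub]
  congr 1

lemma resVec_eq_zero_iff {x : Fin n → K} (hx : ∀ i, x i ∈ A) :
    resVec A x = 0 ↔ vnrm A x < 1 := by
  rw [vnrm_lt_iff A one_ne_zero]
  constructor
  · intro h i
    have hi := congrFun h i
    rw [resVec_apply A hx, Pi.zero_apply, IsLocalRing.residue_eq_zero_iff] at hi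
    exact (A.valuation_lt_one_iff ⟨x i, hx i⟩).1 hi
  · intro h
    funext i
    rw [resVec_apply A hx, Pi.zero_apply, IsLocalRing.residue_eq_zero_iff]
    exact (A.valuation_lt_one_iff ⟨x i, hx i⟩).2 (h i)

lemma resVec_eq_of_close {x y : Fin n → K} (hx : ∀ i, x i ∈ A) (hy : ∀ i, y i ∈ A)
    (h : vnrm A (x - y) < 1) : resVec A x = resVec A y := by
  have := (resVec_eq_zero_iff A (x := x - y) (fun i => by
    simpa using sub_mem (hx i) (hy i))).2 h
  rw [resVec_sub A hx hy, sub_eq_zero] at this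
  exact this


section Proj

variable {A} {Wbar : Submodule (IsLocalRing.ResidueField A)
      (Fin n → IsLocalRing.ResidueField A)}
  {W : Submodule K (Fin n → K)}
  {pibar : (Fin n → IsLocalRing.ResidueField A) →ₗ[IsLocalRing.ResidueField A]
      (Fin n → IsLocalRing.ResidueField A)}
  {π : (Fin n → K) →ₗ[K] (Fin n → K)}

lemma pi_bound
    (hπ_lift : ∀ x : Fin n → K, (∀ i, x i ∈ A) →
      (∀ i, π x i ∈ A) ∧ resVec A (π x) = pibar (resVec A x))
    (x : Fin n → K) : vnrm A (π x) ≤ vnrm A x := by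
  rcases eq_or_ne x 0 with rfl | hx
  · simp [map_zero, vnrm_zero]
  · set r := vnrm A x with hr_def
    have hr : r ≠ 0 := fun h => hx ((vnrm_eq_zero_iff A).1 h)
    obtain ⟨t, ht⟩ := A.valuation_surjective r⁻¹
    have htne : t ≠ 0 := by
      intro h; rw [h, map_zero] at ht; exact inv_ne_zero hr ht.symm
    have h1 : vnrm A (t • x) ≤ 1 := by
      rw [vnrm_smul, ht, ← hr_def, inv_mul_cancel₀ hr]
    obtain ⟨hint, -⟩ := hπ_lift (t • x) ((vnrm_le_one_iff A).1 h1)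
    have h2 : vnrm A (π (t • x)) ≤ 1 := (vnrm_le_one_iff A).2 hint
    rw [map_smul, vnrm_smul, ht] at h2
    have h3 := mul_le_mul_right h2 r
    rwa [← mul_assoc, mul_inv_cancel₀ hr, one_mul, mul_one] at h3

lemma pi_contract (hW : IsLift A W Wbar)
    (hpibar_id : ∀ yb ∈ Wbar, pibar yb = yb)
    (hπ_lift : ∀ x : Fin n → K, (∀ i, x i ∈ A) →
      (∀ i, π x i ∈ A) ∧ resVec A (π x) = pibar (resVec A x))
    {w : Fin n → K} (hw : w ∈ W) (hw0 : w ≠ 0) :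
    vnrm A (π w - w) < vnrm A w := by
  set r := vnrm A w with hr_def
  have hr : r ≠ 0 := fun h => hw0 ((vnrm_eq_zero_iff A).1 h)
  obtain ⟨t, ht⟩ := A.valuation_surjective r⁻¹
  have htne : t ≠ 0 := by
    intro h; rw [h, map_zero] at ht; exact inv_ne_zero hr ht.symm
  have h1 : vnrm A (t • w) ≤ 1 := by
    rw [vnrm_smul, ht, ← hr_def, inv_mul_cancel₀ hr]
  have hint : ∀ i, (t • w) i ∈ A := (vnrm_le_one_iff A).1 h1
  obtain ⟨hπint, hπres⟩ := hπ_lift (t • w) hint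
  have hres : resVec A (t • w) ∈ (Wbar : Set _) := by
    rw [← hW]; exact ⟨t • w, W.smul_mem t hw, hint, rfl⟩
  have heq : resVec A (π (t • w)) = resVec A (t • w) := by
    rw [hπres, hpibar_id _ hres]
  have hz : resVec A (π (t • w) - t • w) = 0 := by
    rw [resVec_sub A hπint hint, heq, sub_self]
  have hlt : vnrm A (π (t • w) - t • w) < 1 :=
    (resVec_eq_zero_iff A (fun i => by
      simpa using sub_mem (hπint i) (hint i))).1 hz
  have hrw : π (t • w) - t • w = t • (π w - w) := by
    rw [map_smul, smul_sub]
  rw [hrw, vnrm_smul, ht] at hlt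
  have : r⁻¹ * vnrm A (π w - w) < r⁻¹ * r := by
    rwa [inv_mul_cancel₀ hr]
  exact lt_of_mul_lt_mul_left' this

lemma pi_norm_W (hW : IsLift A W Wbar)
    (hpibar_id : ∀ yb ∈ Wbar, pibar yb = yb)
    (hπ_lift : ∀ x : Fin n → K, (∀ i, x i ∈ A) →
      (∀ i, π x i ∈ A) ∧ resVec A (π x) = pibar (resVec A x))
    {w : Fin n → K} (hw : w ∈ W) : vnrm A (π w) = vnrm A w := by
  rcases eq_or_ne w 0 with rfl | hw0
  · simp
  · exact vnrm_isosceles A (pi_contract hW hpibar_id hπ_lift hw hw0)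

lemma pi_inj_W (hW : IsLift A W Wbar)
    (hpibar_id : ∀ yb ∈ Wbar, pibar yb = yb)
    (hπ_lift : ∀ x : Fin n → K, (∀ i, x i ∈ A) →
      (∀ i, π x i ∈ A) ∧ resVec A (π x) = pibar (resVec A x))
    {w : Fin n → K} (hw : w ∈ W) (h : π w = 0) : w = 0 := by
  by_contra hw0
  have := pi_contract hW hpibar_id hπ_lift hw hw0
  rw [h, zero_sub, vnrm_neg] at this
  exact absurd this (lt_irrefl _)

lemma exists_proj (hW : IsLift A W Wbar)
    (hpibar_id : ∀ yb ∈ Wbar, pibar yb = yb)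
    (hπ_mem : ∀ x, π x ∈ W)
    (hπ_lift : ∀ x : Fin n → K, (∀ i, x i ∈ A) →
      (∀ i, π x i ∈ A) ∧ resVec A (π x) = pibar (resVec A x)) :
    ∃ p : (Fin n → K) →ₗ[K] (Fin n → K), (∀ x, p x ∈ W) ∧ (∀ w ∈ W, p w = w) ∧
      (∀ x, vnrm A (p x) ≤ vnrm A x) := by
  set q : W →ₗ[K] W := π.restrict (fun x _ => hπ_mem x) with hq_def
  have hq_apply : ∀ u : W, (q u : Fin n → K) = π u := fun u => rfl
  have hqinj : Function.Injective q := by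
    intro a b hab
    have h1 : π (a : Fin n → K) = π (b : Fin n → K) := by
      rw [← hq_apply, ← hq_apply, hab]
    have h2 : π ((a : Fin n → K) - b) = 0 := by rw [map_sub, h1, sub_self]
    have h3 := pi_inj_W hW hpibar_id hπ_lift (sub_mem a.2 b.2) h2
    exact Subtype.ext (sub_eq_zero.1 h3)
  have hqsurj : Function.Surjective q := (LinearMap.injective_iff_surjective).1 hqinj
  set e := LinearEquiv.ofBijective q ⟨hqinj, hqsurj⟩ with he_def
  refine ⟨W.subtype.comp ((e.symm : W →ₗ[K] W).comp (π.codRestrict W hπ_mem)),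
    ?_, ?_, ?_⟩
  · intro x; exact (e.symm ⟨π x, hπ_mem x⟩).2
  · intro w hw
    show ((e.symm ⟨π w, hπ_mem w⟩ : W) : Fin n → K) = w
    have : e.symm ⟨π w, hπ_mem w⟩ = ⟨w, hw⟩ := by
      rw [LinearEquiv.symm_apply_eq]
      apply Subtype.ext
      rw [he_def]
      simp only [LinearEquiv.ofBijective_apply]
      exact (hq_apply ⟨w, hw⟩).symm
    rw [this]
  · intro x
    set u := e.symm ⟨π x, hπ_mem x⟩ with hu_def
    have hqu : q u = ⟨π x, hπ_mem x⟩ := by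
      rw [hu_def]
      exact e.apply_symm_apply _
    have hπu : π (u : Fin n → K) = π x := by
      rw [← hq_apply u, hqu]
    show vnrm A (u : Fin n → K) ≤ vnrm A x
    rw [← pi_norm_W hW hpibar_id hπ_lift u.2, hπu]
    exact pi_bound hπ_lift x

end Proj

lemma sph_inter [CharZero K] (hsph : SphericallyComplete A)
    (T : Set (Set (Fin n → K))) (hT : T.Nonempty)
    (hball : ∀ s ∈ T, ∃ c : Fin n → K, ∃ r : A.ValueGroup, r ≠ 0 ∧
      s = {y | vnrm A (y - c) ≤ r})
    (hchain : IsChain (· ⊆ ·) T) : (⋂₀ T).Nonempty := by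
  choose cf rf hrf hsf using fun s : T => hball s s.2
  have proj_eq : ∀ (s : T) (i : Fin n), (fun y : Fin n → K => y i) '' (s : Set _)
      = {a : K | A.valuation (a - cf s i) ≤ rf s} := by
    intro s i
    ext a
    constructor
    · rintro ⟨y, hy, rfl⟩
      have hse : (s : Set (Fin n → K)) = {y | vnrm A (y - cf s) ≤ rf s} := hsf s
      rw [hse] at hy
      exact le_trans (by simpa using le_vnrm A (y - cf s) i) hy
    · intro ha
      refine ⟨Function.update (cf s) i a, ?_, Function.update_self i a (cf s)⟩
      have hse : (s : Set (Fin n → K)) = {y | vnrm A (y - cf s) ≤ rf s} := hsf s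
      rw [hse]
      show vnrm A _ ≤ _
      rw [vnrm_le_iff]
      intro j
      rcases eq_or_ne j i with rfl | hj
      · simpa using ha
      · simp [Function.update_of_ne hj]
  set F : Set (Fin n → K) → Set K → Prop := fun _ _ => True with hF
  have main : ∀ i : Fin n, ∃ zi : K, ∀ s ∈ T, zi ∈ (fun y : Fin n → K => y i) '' s := by
    intro i
    set Ti := (fun s => (fun y : Fin n → K => y i) '' s) '' T with hTi
    have hTine : Ti.Nonempty := hT.image _
    have hTiball : ∀ s' ∈ Ti, IsBall1 A s' := by
      rintro s' ⟨s, hs, rfl⟩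
      have hpe : (fun y : Fin n → K => y i) '' s
          = {a : K | A.valuation (a - cf ⟨s, hs⟩ i) ≤ rf ⟨s, hs⟩} := proj_eq ⟨s, hs⟩ i
      show IsBall1 A ((fun y : Fin n → K => y i) '' s)
      rw [hpe]
      constructor
      · obtain ⟨t, ht⟩ := A.valuation_surjective (rf ⟨s, hs⟩)
        have htne : t ≠ 0 := by
          intro h; rw [h, map_zero] at ht; exact hrf ⟨s, hs⟩ ht.symm
        apply Set.infinite_of_injective_forall_mem
          (f := fun m : ℕ => cf ⟨s, hs⟩ i + t * m)
        · intro m₁ m₂ hm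
          have := add_left_cancel hm
          have := mul_left_cancel₀ htne this
          exact_mod_cast this
        · intro m
          show A.valuation (cf ⟨s, hs⟩ i + t * m - cf ⟨s, hs⟩ i) ≤ rf ⟨s, hs⟩
          rw [add_sub_cancel_left, map_mul, ht]
          calc rf ⟨s, hs⟩ * A.valuation (m : K) ≤ rf ⟨s, hs⟩ * 1 := by
                exact mul_le_mul_right ((A.valuation_le_one_iff _).2
                  (natCast_mem A m)) _
            _ = rf ⟨s, hs⟩ := mul_one _
      · intro x hx x' hx' y hy
        show A.valuation (y - cf ⟨s, hs⟩ i) ≤ rf ⟨s, hs⟩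
        have h1 : A.valuation (y - cf ⟨s, hs⟩ i)
            ≤ max (A.valuation (y - x)) (A.valuation (x - cf ⟨s, hs⟩ i)) := by
          have : y - cf ⟨s, hs⟩ i = (y - x) + (x - cf ⟨s, hs⟩ i) := by ring
          rw [this]; exact A.valuation.map_add _ _
        have h2 : A.valuation (y - x) ≤ A.valuation (x - x') := by
          rwa [← Valuation.map_sub_swap]
        have h3 : A.valuation (x - x') ≤ rf ⟨s, hs⟩ := by
          have : x - x' = (x - cf ⟨s, hs⟩ i) - (x' - cf ⟨s, hs⟩ i) := by ring
          rw [this]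
          exact le_trans (Valuation.map_sub _ _ _) (max_le hx hx')
        exact le_trans h1 (max_le (le_trans h2 h3) hx)
    have hTichain : IsChain (· ⊆ ·) Ti := by
      rintro s₁' ⟨s₁, hs₁, rfl⟩ s₂' ⟨s₂, hs₂, rfl⟩ hne
      have hne' : s₁ ≠ s₂ := fun h => hne (by rw [h])
      rcases hchain hs₁ hs₂ hne' with h | h
      · exact Or.inl (Set.image_mono h)
      · exact Or.inr (Set.image_mono h)
    obtain ⟨zi, hzi⟩ := hsph Ti hTine hTiball hTichain
    exact ⟨zi, fun s hs => hzi _ ⟨s, hs, rfl⟩⟩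
  choose z hz using main
  refine ⟨z, ?_⟩
  rintro s hs
  have hse : s = {y | vnrm A (y - cf ⟨s, hs⟩) ≤ rf ⟨s, hs⟩} := hsf ⟨s, hs⟩
  rw [hse]
  show vnrm A _ ≤ _
  rw [vnrm_le_iff]
  intro i
  obtain ⟨y, hy, hyi⟩ := hz i s hs
  rw [hse] at hy
  have hyi' : y i = z i := hyi
  have hle := le_vnrm A (y - cf ⟨s, hs⟩) i
  rw [Pi.sub_apply, hyi'] at hle
  show A.valuation ((z - cf ⟨s, hs⟩) i) ≤ _
  rw [Pi.sub_apply]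
  exact le_trans hle hy


section Graph

variable {A} {W : Submodule K (Fin n → K)}
  {π : (Fin n → K) →ₗ[K] (Fin n → K)}
  {p : (Fin n → K) →ₗ[K] (Fin n → K)}
  {B X : Set (Fin n → K)}

/-- The key approximation step. -/
lemma step
    (hdir : ∀ x₁ ∈ X ∩ B, ∀ x₂ ∈ X ∩ B, ∃ w ∈ W, RvEq A (x₁ - x₂) w)
    (hπ_norm : ∀ w ∈ W, vnrm A (π w) = vnrm A w)
    (hπ_bound : ∀ x, vnrm A (π x) ≤ vnrm A x)
    (hp_mem : ∀ x, p x ∈ W) (hp_id : ∀ w ∈ W, p w = w)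
    (hp_bound : ∀ x, vnrm A (p x) ≤ vnrm A x)
    {b xt z xs : Fin n → K} (hxt : xt ∈ X ∩ B) (hxs : xs ∈ X ∩ B)
    (hzx : vnrm A (z - xt) ≤ vnrm A (p (xt - b)))
    (hπeq : π xs = π (z + p (b - z))) :
    vnrm A (xs - xt) ≤ vnrm A (p (xt - b)) ∧
      vnrm A (p (xs - b)) ≤ vnrm A (p (xt - b)) ∧
      (z = xt → vnrm A (p (xt - b)) ≠ 0 →
        vnrm A (p (xs - b)) < vnrm A (p (xt - b))) := by
  set r := vnrm A (p (xt - b)) with hr_def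
  set d := (z + p (b - z)) - xt with hd_def
  have hpp : ∀ u, p (p u) = p u := fun u => hp_id _ (hp_mem u)
  have hpd : p d = p (b - xt) := by
    rw [hd_def, map_sub, map_add, hpp, ← map_add, ← map_sub]
    congr 1
    abel
  have hvpd : vnrm A (p d) = r := by
    rw [hpd, hr_def]
    have : p (b - xt) = -(p (xt - b)) := by rw [← map_neg]; congr 1; abel
    rw [this, vnrm_neg]
  have hdρ : vnrm A (d - p d) ≤ vnrm A (z - xt) := by
    have heq : d - p d = (z - xt) - p (z - xt) := by
      rw [hd_def, hpd]
      simp only [map_sub, map_add]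
      abel
    rw [heq]
    exact le_trans (vnrm_sub_le A _ _) (max_le le_rfl (hp_bound _))
  obtain ⟨w, hwW, hrv⟩ := hdir xs hxs xt hxt
  set ε := (xs - xt) - w with hε_def
  have hcase : ε = 0 ∨ vnrm A ε < vnrm A (xs - xt) := by
    rcases hrv with h | h
    · left; rw [hε_def, h, sub_self]
    · right
      have : ε = -(w - (xs - xt)) := by rw [hε_def]; abel
      rw [this, vnrm_neg]
      exact h
  have hπd : π (xs - xt) = π d := by
    rw [hd_def, map_sub π xs xt, map_sub π (z + p (b - z)) xt, hπeq]
  have hπw : π (w - p d) = π (d - p d) - π ε := by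
    have hw : w = (xs - xt) - ε := by rw [hε_def]; abel
    have h1 : π w = π d - π ε := by
      rw [hw, map_sub π (xs - xt) ε, hπd]
    rw [map_sub π w (p d), h1, map_sub π d (p d)]
    abel
  have hwpd : vnrm A (w - p d) ≤ max (vnrm A (z - xt)) (vnrm A ε) := by
    rw [← hπ_norm _ (sub_mem hwW (hp_mem d)), hπw]
    refine le_trans (vnrm_sub_le A _ _) (max_le_max ?_ ?_)
    · exact le_trans (hπ_bound _) hdρ
    · exact hπ_bound _
  -- (a)
  have hA : vnrm A (xs - xt) ≤ r := by
    by_contra hgt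
    push_neg at hgt
    have hw_eq : vnrm A w = vnrm A (xs - xt) := by
      rcases hcase with h | h
      · have : w = xs - xt := by
          have := sub_eq_zero.1 h; rw [this]
        rw [this]
      · refine vnrm_isosceles A ?_
        have : w - (xs - xt) = -ε := by rw [hε_def]; abel
        rw [this, vnrm_neg]
        exact h
    have hpos : (0 : A.ValueGroup) < vnrm A w := by
      rw [hw_eq]; exact lt_of_le_of_lt zero_le' hgt
    have hε_lt : vnrm A ε < vnrm A w := by
      rcases hcase with h | h
      · rw [h, vnrm_zero]; exact hpos
      · rw [hw_eq]; exact h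
    have hpd_lt : vnrm A (p d) < vnrm A w := by
      rw [hvpd, hw_eq]; exact hgt
    have hne : vnrm A (w - p d) = vnrm A w := by
      refine vnrm_isosceles A ?_
      have : (w - p d) - w = -(p d) := by abel
      rw [this, vnrm_neg]
      exact hpd_lt
    rw [hne] at hwpd
    have hrlt : r < vnrm A w := hvpd ▸ hpd_lt
    exact absurd (lt_of_le_of_lt hwpd
      (max_lt (lt_of_le_of_lt hzx hrlt) hε_lt)) (lt_irrefl _)
  -- ε is small
  have hεr : vnrm A ε ≤ r := by
    rcases hcase with h | h
    · rw [h, vnrm_zero]; exact zero_le'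
    · exact le_trans h.le hA
  -- p (xs - b) decomposition
  have hps : p (xs - b) = (w - p d) + p ε := by
    have h1 : xs - b = (xs - xt) - (b - xt) := by abel
    have h2 : xs - xt = w + ε := by rw [hε_def]; abel
    rw [h1, map_sub, h2, map_add, hp_id w hwW, hpd]
    abel
  have hB' : vnrm A (p (xs - b)) ≤ r := by
    rw [hps]
    refine le_trans (vnrm_add_le A _ _) (max_le ?_ ?_)
    · exact le_trans hwpd (max_le hzx hεr)
    · exact le_trans (hp_bound _) hεr
  refine ⟨hA, hB', ?_⟩
  intro hz0 hr0
  have hz00 : vnrm A (z - xt) = 0 := by rw [hz0, sub_self, vnrm_zero]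
  have hwpd' : vnrm A (w - p d) ≤ vnrm A ε := by
    refine le_trans hwpd ?_
    rw [hz00]
    exact max_le zero_le' le_rfl
  have hmain : vnrm A (p (xs - b)) ≤ vnrm A ε := by
    rw [hps]
    exact le_trans (vnrm_add_le A _ _) (max_le hwpd' (hp_bound _))
  rcases hcase with h | h
  · rw [h, vnrm_zero, le_zero_iff] at hmain
    rw [hmain]
    exact zero_lt_iff.2 hr0
  · exact lt_of_le_of_lt hmain (lt_of_lt_of_le h hA)

lemma graph_inj
    (hdir : ∀ x₁ ∈ X ∩ B, ∀ x₂ ∈ X ∩ B, ∃ w ∈ W, RvEq A (x₁ - x₂) w)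
    (hp_mem : ∀ x, p x ∈ W) (hp_id : ∀ w ∈ W, p w = w)
    (hp_bound : ∀ x, vnrm A (p x) ≤ vnrm A x)
    {x₁ x₂ : Fin n → K} (h₁ : x₁ ∈ X ∩ B) (h₂ : x₂ ∈ X ∩ B)
    (hpp : p x₁ = p x₂) : x₁ = x₂ := by
  obtain ⟨w, hwW, hrv⟩ := hdir x₁ h₁ x₂ h₂
  have hp0 : p (x₁ - x₂) = 0 := by rw [map_sub, hpp, sub_self]
  rcases hrv with h | h
  · have hw0 : w = 0 := by rw [← hp_id w hwW, ← h, hp0]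
    rw [hw0] at h
    exact sub_eq_zero.1 h
  · exfalso
    set ε := (x₁ - x₂) - w with hε_def
    have hεv : vnrm A ε < vnrm A (x₁ - x₂) := by
      have : ε = -(w - (x₁ - x₂)) := by rw [hε_def]; abel
      rw [this, vnrm_neg]
      exact h
    have hw : w = -(p ε) := by
      have h1 : p (x₁ - x₂) = w + p ε := by
        have h2 : x₁ - x₂ = w + ε := by rw [hε_def]; abel
        rw [h2, map_add, hp_id w hwW]
      rw [hp0] at h1
      linear_combination (norm := abel) -h1
    have hwv : vnrm A w ≤ vnrm A ε := by
      rw [hw, vnrm_neg]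
      exact hp_bound ε
    have h3 : x₁ - x₂ = w + ε := by rw [hε_def]; abel
    have h4 : vnrm A (x₁ - x₂) ≤ vnrm A ε := by
      rw [h3]
      exact le_trans (vnrm_add_le A _ _) (max_le hwv le_rfl)
    exact absurd (lt_of_le_of_lt h4 hεv) (lt_irrefl _)

lemma graph_contract
    (hdir : ∀ x₁ ∈ X ∩ B, ∀ x₂ ∈ X ∩ B, ∃ w ∈ W, RvEq A (x₁ - x₂) w)
    (hp_mem : ∀ x, p x ∈ W) (hp_id : ∀ w ∈ W, p w = w)
    (hp_bound : ∀ x, vnrm A (p x) ≤ vnrm A x)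
    {x₁ x₂ : Fin n → K} (h₁ : x₁ ∈ X ∩ B) (h₂ : x₂ ∈ X ∩ B)
    (hne : p x₁ ≠ p x₂) :
    vnrm A ((x₁ - p x₁) - (x₂ - p x₂)) < vnrm A (p x₁ - p x₂) := by
  obtain ⟨w, hwW, hrv⟩ := hdir x₁ h₁ x₂ h₂
  have hρ : (x₁ - p x₁) - (x₂ - p x₂) = (x₁ - x₂) - p (x₁ - x₂) := by
    rw [map_sub]; abel
  have hpne : p x₁ - p x₂ ≠ 0 := sub_ne_zero.2 hne
  rcases hrv with h | h
  · have : (x₁ - x₂) - p (x₁ - x₂) = 0 := by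
      rw [h, hp_id w hwW, sub_self]
    rw [hρ, this, vnrm_zero]
    exact vnrm_pos A hpne
  · set ε := (x₁ - x₂) - w with hε_def
    have hεv : vnrm A ε < vnrm A (x₁ - x₂) := by
      have : ε = -(w - (x₁ - x₂)) := by rw [hε_def]; abel
      rw [this, vnrm_neg]
      exact h
    have hw0 : w ≠ 0 := by
      rintro rfl
      rw [zero_sub, vnrm_neg] at h
      exact absurd h (lt_irrefl _)
    have hvw : vnrm A w = vnrm A (x₁ - x₂) := by
      refine vnrm_isosceles A ?_
      have : w - (x₁ - x₂) = -ε := by rw [hε_def]; abel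
      rw [this, vnrm_neg]
      exact hεv
    have hεw : vnrm A ε < vnrm A w := by rw [hvw]; exact hεv
    have h3 : x₁ - x₂ = w + ε := by rw [hε_def]; abel
    have hLHS : vnrm A ((x₁ - x₂) - p (x₁ - x₂)) ≤ vnrm A ε := by
      have : (x₁ - x₂) - p (x₁ - x₂) = ε - p ε := by
        rw [h3, map_add, hp_id w hwW]
        abel
      rw [this]
      exact le_trans (vnrm_sub_le A _ _) (max_le le_rfl (hp_bound ε))
    have hRHS : vnrm A (p x₁ - p x₂) = vnrm A w := by
      have h4 : p x₁ - p x₂ = w + p ε := by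
        rw [← map_sub, h3, map_add, hp_id w hwW]
      refine h4 ▸ vnrm_isosceles A ?_
      have : (w + p ε) - w = p ε := by abel
      rw [this]
      exact lt_of_le_of_lt (hp_bound ε) hεw
    rw [hρ, hRHS]
    exact lt_of_le_of_lt hLHS hεw


/-- every `p`-fiber over `B` meets `X ∩ B`. -/
lemma exists_p_eq [CharZero K] (hsph : SphericallyComplete A)
    (hB : IsBall A B)
    (himg : π '' (X ∩ B) = π '' B)
    (hdir : ∀ x₁ ∈ X ∩ B, ∀ x₂ ∈ X ∩ B, ∃ w ∈ W, RvEq A (x₁ - x₂) w)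
    (hπ_norm : ∀ w ∈ W, vnrm A (π w) = vnrm A w)
    (hπ_bound : ∀ x, vnrm A (π x) ≤ vnrm A x)
    (hp_mem : ∀ x, p x ∈ W) (hp_id : ∀ w ∈ W, p w = w)
    (hp_bound : ∀ x, vnrm A (p x) ≤ vnrm A x)
    {b : Fin n → K} (hb : b ∈ B) : ∃ x ∈ X ∩ B, p x = p b := by
  by_contra hcon
  push_neg at hcon
  have hne0 : ∀ x ∈ X ∩ B, vnrm A (p (x - b)) ≠ 0 := by
    intro x hx h
    rw [vnrm_eq_zero_iff, map_sub, sub_eq_zero] at h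
    exact hcon x hx h
  have hXB : (X ∩ B).Nonempty := by
    have h1 : π b ∈ π '' B := Set.mem_image_of_mem _ hb
    rw [← himg] at h1
    obtain ⟨x₀, hx₀, -⟩ := h1
    exact ⟨x₀, hx₀⟩
  have getx : ∀ z ∈ B, ∃ xs ∈ X ∩ B, π xs = π (z + p (b - z)) := by
    intro z hz
    have hbz : z + p (b - z) ∈ B := by
      refine hB.2 z hz b hb _ ?_
      have h1 : z - (z + p (b - z)) = -(p (b - z)) := by abel
      rw [h1, vnrm_neg]
      exact le_trans (hp_bound _) (by rw [vnrm_sub_rev])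
    have h1 : π (z + p (b - z)) ∈ π '' B := Set.mem_image_of_mem _ hbz
    rw [← himg] at h1
    obtain ⟨xs, hxs, hπs⟩ := h1
    exact ⟨xs, hxs, hπs⟩
  haveI : Nonempty {x : Fin n → K // x ∈ X ∩ B} := ⟨⟨hXB.choose, hXB.choose_spec⟩⟩
  set α := {x : Fin n → K // x ∈ X ∩ B}
  set e : α → A.ValueGroup := fun x => vnrm A (p ((x : Fin n → K) - b)) with he_def
  set rel : α → α → Prop := fun x y =>
    vnrm A ((y : Fin n → K) - (x : Fin n → K)) ≤ e x ∧ e y < e x with hrel_def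
  have htrans : ∀ {x y z : α}, rel x y → rel y z → rel x z := by
    intro x y z hxy hyz
    constructor
    · have h1 : (z : Fin n → K) - (x : Fin n → K)
          = ((z : Fin n → K) - (y : Fin n → K)) + ((y : Fin n → K) - (x : Fin n → K)) := by
        abel
      rw [h1]
      exact le_trans (vnrm_add_le A _ _)
        (max_le (le_trans hyz.1 hxy.2.le) hxy.1)
    · exact lt_trans hyz.2 hxy.2
  have hsucc : ∀ x : α, ∃ y : α, rel x y := by
    intro x
    obtain ⟨xs, hxs, hπs⟩ := getx (x : Fin n → K) x.2.2
    have hst := step hdir hπ_norm hπ_bound hp_mem hp_id hp_bound x.2 hxs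
      (z := (x : Fin n → K)) (b := b)
      (by rw [sub_self, vnrm_zero]; exact zero_le') hπs
    exact ⟨⟨xs, hxs⟩, hst.1, hst.2.2 rfl (hne0 _ x.2)⟩
  have hchains : ∀ c : Set α, IsChain rel c → ∃ ub, ∀ a ∈ c, rel a ub := by
    intro c hc
    rcases Set.eq_empty_or_nonempty c with rfl | hcne
    · exact ⟨Classical.arbitrary α, by simp⟩
    by_cases hmax : ∃ m ∈ c, ∀ a ∈ c, a = m ∨ rel a m
    · obtain ⟨m, hm, hmub⟩ := hmax
      obtain ⟨u, hu⟩ := hsucc m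
      refine ⟨u, fun a ha => ?_⟩
      rcases hmub a ha with rfl | h
      · exact hu
      · exact htrans h hu
    push_neg at hmax
    -- intersection of the chain of balls
    set T := (fun x : α => {y : Fin n → K | vnrm A (y - (x : Fin n → K)) ≤ e x}) '' c
      with hT_def
    have hTne : T.Nonempty := hcne.image _
    have hTball : ∀ s ∈ T, ∃ cc : Fin n → K, ∃ r : A.ValueGroup, r ≠ 0 ∧
        s = {y | vnrm A (y - cc) ≤ r} := by
      rintro s ⟨x, hx, rfl⟩
      exact ⟨x, e x, hne0 _ x.2, rfl⟩
    have hball_sub : ∀ x y : α, rel x y →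
        {u : Fin n → K | vnrm A (u - (y : Fin n → K)) ≤ e y}
          ⊆ {u : Fin n → K | vnrm A (u - (x : Fin n → K)) ≤ e x} := by
      intro x y hxy u hu
      have h1 : u - (x : Fin n → K)
          = (u - (y : Fin n → K)) + ((y : Fin n → K) - (x : Fin n → K)) := by abel
      show vnrm A (u - (x : Fin n → K)) ≤ e x
      rw [h1]
      exact le_trans (vnrm_add_le A _ _)
        (max_le (le_trans hu hxy.2.le) hxy.1)
    have hTchain : IsChain (· ⊆ ·) T := by
      rintro s₁ ⟨x₁, hx₁, rfl⟩ s₂ ⟨x₂, hx₂, rfl⟩ hne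
      rcases eq_or_ne x₁ x₂ with rfl | hxne
      · exact absurd rfl hne
      rcases hc hx₁ hx₂ hxne with h | h
      · exact Or.inr (hball_sub x₁ x₂ h)
      · exact Or.inl (hball_sub x₂ x₁ h)
    obtain ⟨z, hz⟩ := sph_inter A hsph T hTne hTball hTchain
    have hzball : ∀ x ∈ c, vnrm A (z - (x : Fin n → K)) ≤ e x := by
      intro x hx
      exact hz _ ⟨x, hx, rfl⟩
    have hzB : z ∈ B := by
      obtain ⟨x₁, hx₁⟩ := hcne
      refine hB.2 (x₁ : Fin n → K) x₁.2.2 b hb z ?_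
      rw [vnrm_sub_rev]
      exact le_trans (hzball x₁ hx₁) (le_trans (hp_bound _) le_rfl)
    obtain ⟨xs, hxs, hπs⟩ := getx z hzB
    refine ⟨⟨xs, hxs⟩, fun a ha => ?_⟩
    obtain ⟨a₂, ha₂c, ha₂⟩ := hmax a ha
    have ha₂ne : a₂ ≠ a := ha₂.1
    have hrel12 : rel a a₂ := by
      rcases hc ha ha₂c ha₂ne.symm with h | h
      · exact h
      · exact absurd h ha₂.2
    have hst := step hdir hπ_norm hπ_bound hp_mem hp_id hp_bound a₂.2 hxs
      (z := z) (b := b) (hzball a₂ ha₂c) hπs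
    constructor
    · have h1 : xs - (a : Fin n → K)
        = (xs - (a₂ : Fin n → K)) + ((a₂ : Fin n → K) - a) := by abel
      show vnrm A (xs - (a : Fin n → K)) ≤ e a
      rw [h1]
      exact le_trans (vnrm_add_le A _ _)
        (max_le (le_trans hst.1 hrel12.2.le) hrel12.1)
    · exact lt_of_le_of_lt hst.2.1 hrel12.2
  obtain ⟨m, hm⟩ := exists_maximal_of_chains_bounded hchains (fun {a b c} => htrans)
  obtain ⟨u, hu⟩ := hsucc m
  exact absurd (hm u hu).2 (not_lt.2 hu.2.le)

end Graph

end RisoAux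

/-- if `π_W(X ∩ B) = π_W(B)` and all differences of points of `X ∩ B`
have leading term in `rv⁽ⁿ⁾(W)`, then the riso-triviality space of `X` on `B` is
exactly `Wbar`: `X` is `Wbar`-riso-trivial on `B` and `Wbar` is maximal such. -/
theorem rtsp_of_graph_like (A : ValuationSubring K) [CharZero K]
    [CharZero (IsLocalRing.ResidueField A)] (hsph : SphericallyComplete A)
    {n : ℕ} (B : Set (Fin n → K)) (hB : IsBall A B)
    (Wbar : Submodule (IsLocalRing.ResidueField A)
      (Fin n → IsLocalRing.ResidueField A))
    (W : Submodule K (Fin n → K)) (hW : IsLift A W Wbar)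
    (pibar : (Fin n → IsLocalRing.ResidueField A) →ₗ[IsLocalRing.ResidueField A]
      (Fin n → IsLocalRing.ResidueField A))
    (hpibar_mem : ∀ yb, pibar yb ∈ Wbar) (hpibar_id : ∀ yb ∈ Wbar, pibar yb = yb)
    (π : (Fin n → K) →ₗ[K] (Fin n → K)) (hπ_mem : ∀ x, π x ∈ W)
    (hπ_lift : ∀ x : Fin n → K, (∀ i, x i ∈ A) →
      (∀ i, π x i ∈ A) ∧ resVec A (π x) = pibar (resVec A x))
    (X : Set (Fin n → K))
    (himg : π '' (X ∩ B) = π '' B)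
    (hdir : ∀ x₁ ∈ X ∩ B, ∀ x₂ ∈ X ∩ B, ∃ w ∈ W, RvEq A (x₁ - x₂) w) :
    SetRisoTrivialOn A X B Wbar ∧
      ∀ Vbar, SetRisoTrivialOn A X B Vbar → Vbar ≤ Wbar := by
  classical
  have hπ_bound : ∀ x, vnrm A (π x) ≤ vnrm A x := RisoAux.pi_bound hπ_lift
  have hπ_norm : ∀ w ∈ W, vnrm A (π w) = vnrm A w := fun w hw =>
    RisoAux.pi_norm_W hW hpibar_id hπ_lift hw
  obtain ⟨p, hp_mem, hp_id, hp_bound⟩ :=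
    RisoAux.exists_proj hW hpibar_id hπ_mem hπ_lift
  obtain ⟨b₀, hb₀⟩ := hB.1.nonempty
  have hXBne : (X ∩ B).Nonempty := by
    have h1 : π b₀ ∈ π '' B := Set.mem_image_of_mem _ hb₀
    rw [← himg] at h1
    obtain ⟨x₀, hx₀, -⟩ := h1
    exact ⟨x₀, hx₀⟩
  obtain ⟨x₀, hx₀⟩ := hXBne
  have hfib : ∀ b ∈ B, ∃ x ∈ X ∩ B, p x = p b := fun b hb =>
    RisoAux.exists_p_eq hsph hB himg hdir hπ_norm hπ_bound hp_mem hp_id hp_bound hb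
  have huniq : ∀ x₁ ∈ X ∩ B, ∀ x₂ ∈ X ∩ B, p x₁ = p x₂ → x₁ = x₂ :=
    fun x₁ h₁ x₂ h₂ h => RisoAux.graph_inj hdir hp_mem hp_id hp_bound h₁ h₂ h
  set g : (Fin n → K) → (Fin n → K) := fun c =>
    if h : ∃ x, x ∈ X ∩ B ∧ p x = c then h.choose else 0 with hg_def
  have hg : ∀ b ∈ B, g (p b) ∈ X ∩ B ∧ p (g (p b)) = p b := by
    intro b hb
    obtain ⟨x, hx, hpx⟩ := hfib b hb
    have hex : ∃ x, x ∈ X ∩ B ∧ p x = p b := ⟨x, hx, hpx⟩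
    have hgb : g (p b) = hex.choose := dif_pos hex
    rw [hgb]
    exact ⟨hex.choose_spec.1, hex.choose_spec.2⟩
  have hgX : ∀ u ∈ X ∩ B, g (p u) = u := by
    intro u hu
    have h1 := hg u hu.2
    exact huniq _ h1.1 _ hu h1.2
  set hfn : (Fin n → K) → (Fin n → K) := fun c => g c - p (g c) with hh_def
  set φ : (Fin n → K) → (Fin n → K) :=
    fun x => x + hfn (p x) - hfn (p x₀) with hφ_def
  have hph0 : ∀ c, p (hfn c) = 0 := by
    intro c
    show p (g c - p (g c)) = 0
    rw [map_sub, hp_id _ (hp_mem _), sub_self]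
  have hcontr : ∀ b₁ ∈ B, ∀ b₂ ∈ B, p b₁ ≠ p b₂ →
      vnrm A (hfn (p b₁) - hfn (p b₂)) < vnrm A (p b₁ - p b₂) := by
    intro b₁ hb₁ b₂ hb₂ hne
    have h₁ := hg b₁ hb₁
    have h₂ := hg b₂ hb₂
    have hne' : p (g (p b₁)) ≠ p (g (p b₂)) := by rw [h₁.2, h₂.2]; exact hne
    have hc := RisoAux.graph_contract hdir hp_mem hp_id hp_bound h₁.1 h₂.1 hne'
    rw [h₁.2, h₂.2] at hc
    have hEq : hfn (p b₁) - hfn (p b₂) = (g (p b₁) - p b₁) - (g (p b₂) - p b₂) := by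
      show (g (p b₁) - p (g (p b₁))) - (g (p b₂) - p (g (p b₂))) = _
      rw [h₁.2, h₂.2]
    rw [hEq]
    exact hc
  have hpφ : ∀ x, p (φ x) = p x := by
    intro x
    show p (x + hfn (p x) - hfn (p x₀)) = p x
    rw [map_sub, map_add, hph0, hph0, add_zero, sub_zero]
  have hφB : ∀ x ∈ B, φ x ∈ B := by
    intro x hx
    rcases eq_or_ne (p x) (p x₀) with heq | hne
    · have h0 : φ x = x := by
        show x + hfn (p x) - hfn (p x₀) = x
        rw [heq]; abel
      rw [h0]; exact hx
    · refine hB.2 x hx x₀ hx₀.2 _ ?_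
      have h1 : x - φ x = hfn (p x₀) - hfn (p x) := by
        show x - (x + hfn (p x) - hfn (p x₀)) = _
        abel
      rw [h1, RisoAux.vnrm_sub_rev]
      refine le_trans (le_of_lt (hcontr x hx x₀ hx₀.2 hne)) ?_
      rw [← map_sub]
      exact hp_bound _
  have hchar : ∀ x ∈ B, (φ x ∈ X ↔ x - p x = hfn (p x₀)) := by
    intro x hx
    constructor
    · intro hφX
      have hgφ : g (p x) = φ x := by
        have h0 := hgX (φ x) ⟨hφX, hφB x hx⟩
        rwa [hpφ] at h0
      have h2 : hfn (p x) = φ x - p x := by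
        show g (p x) - p (g (p x)) = φ x - p x
        rw [hgφ, hpφ]
      have h3 : φ x = x + (φ x - p x) - hfn (p x₀) := by
        show x + hfn (p x) - hfn (p x₀) = x + (φ x - p x) - hfn (p x₀)
        rw [h2]
      have h4 : (x - p x) - hfn (p x₀) = (x + (φ x - p x) - hfn (p x₀)) - φ x := by
        abel
      rw [← h3, sub_self] at h4
      exact sub_eq_zero.1 h4
    · intro hxρ
      have h1 := hg x hx
      have h2 : hfn (p x) = g (p x) - p x := by
        show g (p x) - p (g (p x)) = _
        rw [h1.2]
      have hgoal : φ x = g (p x) := by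
        show x + hfn (p x) - hfn (p x₀) = g (p x)
        rw [h2, ← hxρ]
        abel
      rw [hgoal]
      exact h1.1.1
  constructor
  · refine ⟨W, hW, φ, ⟨⟨hφB, ?_, ?_⟩, ?_⟩, ?_⟩
    · -- InjOn
      intro x hx x' hx' heq
      have hpe : p x = p x' := by rw [← hpφ x, ← hpφ x', heq]
      have heq' : x + hfn (p x') - hfn (p x₀) = x' + hfn (p x') - hfn (p x₀) := by
        calc x + hfn (p x') - hfn (p x₀)
            = x + hfn (p x) - hfn (p x₀) := by rw [hpe]
          _ = φ x := rfl
          _ = φ x' := heq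
          _ = x' + hfn (p x') - hfn (p x₀) := rfl
      calc x = (x + hfn (p x') - hfn (p x₀)) - hfn (p x') + hfn (p x₀) := by abel
        _ = (x' + hfn (p x') - hfn (p x₀)) - hfn (p x') + hfn (p x₀) := by rw [heq']
        _ = x' := by abel
    · -- SurjOn
      intro z hz
      set x := z - hfn (p z) + hfn (p x₀) with hx_def
      have hpx : p x = p z := by
        show p (z - hfn (p z) + hfn (p x₀)) = p z
        rw [map_add, map_sub, hph0, hph0, sub_zero, add_zero]
      have hxB : x ∈ B := by
        rcases eq_or_ne (p z) (p x₀) with heq | hne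
        · have h0 : x = z := by rw [hx_def, heq]; abel
          rw [h0]; exact hz
        · refine hB.2 z hz x₀ hx₀.2 _ ?_
          have h1 : z - x = hfn (p z) - hfn (p x₀) := by rw [hx_def]; abel
          rw [h1]
          refine le_trans (le_of_lt (hcontr z hz x₀ hx₀.2 hne)) ?_
          rw [← map_sub]
          exact hp_bound _
      refine ⟨x, hxB, ?_⟩
      show x + hfn (p x) - hfn (p x₀) = z
      rw [hpx, hx_def]
      abel
    · -- risometry inequality
      intro x₁ hx₁ x₂ hx₂ hne
      have hde : φ x₁ - φ x₂ - (x₁ - x₂) = hfn (p x₁) - hfn (p x₂) := by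
        show (x₁ + hfn (p x₁) - hfn (p x₀)) - (x₂ + hfn (p x₂) - hfn (p x₀))
          - (x₁ - x₂) = _
        abel
      rw [hde]
      rcases eq_or_ne (p x₁) (p x₂) with heq | hpne
      · rw [heq, sub_self, RisoAux.vnrm_zero]
        exact RisoAux.vnrm_pos A (sub_ne_zero.2 hne)
      · refine lt_of_lt_of_le (hcontr x₁ hx₁ x₂ hx₂ hpne) ?_
        rw [← map_sub]
        exact hp_bound _
    · -- invariance
      intro x hx x' hx' hmem
      have hkey : x - p x = x' - p x' := by
        have h1 : (x - p x) - (x' - p x') = (x - x') - p (x - x') := by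
          rw [map_sub]; abel
        have h2 : (x - x') - p (x - x') = 0 := by rw [hp_id _ hmem, sub_self]
        exact sub_eq_zero.1 (h1.trans h2)
      rw [hchar x hx, hchar x' hx', hkey]
  · -- maximality
    intro Vbar hVtriv
    obtain ⟨V, hV, φ', hφ'riso, hφ'inv⟩ := hVtriv
    intro vb hvb
    rcases eq_or_ne vb 0 with rfl | hvb0
    · exact Wbar.zero_mem
    have hvb' : vb ∈ {yb | ∃ x ∈ V, (∀ i, x i ∈ A) ∧ resVec A x = yb} := by
      rw [hV]; exact hvb
    obtain ⟨v, hvV, hvint, hvres⟩ := hvb'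
    haveI hfin : Nonempty (Fin n) := by
      by_contra h
      haveI : IsEmpty (Fin n) := not_nonempty_iff.1 h
      exact hB.1 (Set.toFinite B)
    have hvnrm : vnrm A v = 1 := by
      refine le_antisymm ((RisoAux.vnrm_le_one_iff A).2 hvint) ?_
      obtain ⟨i, hi⟩ : ∃ i, vb i ≠ 0 := by
        by_contra h
        push_neg at h
        exact hvb0 (funext h)
      rw [← hvres] at hi
      have h1 : resVec A v i = IsLocalRing.residue A ⟨v i, hvint i⟩ :=
        dif_pos (hvint i)
      rw [h1] at hi
      have h2 : ¬ ((⟨v i, hvint i⟩ : A) ∈ IsLocalRing.maximalIdeal A) := by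
        rw [← IsLocalRing.residue_eq_zero_iff]
        exact hi
      have h3 : ¬ A.valuation (v i) < 1 := fun hc =>
        h2 ((A.valuation_lt_one_iff _).2 hc)
      exact le_trans (not_lt.1 h3) (RisoAux.le_vnrm A v i)
    have hv0 : v ≠ 0 := by
      intro h
      rw [h, RisoAux.vnrm_zero] at hvnrm
      exact one_ne_zero hvnrm.symm
    obtain ⟨x, hxB2, hφ'x⟩ := hφ'riso.1.2.2 hx₀.2
    have hφ'xX : φ' x ∈ X ∩ B := by rw [hφ'x]; exact hx₀
    obtain ⟨b₁, hb₁⟩ := (hB.1.diff (Set.finite_singleton x)).nonempty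
    have hb₁B : b₁ ∈ B := hb₁.1
    have hb₁ne : b₁ ≠ x := hb₁.2
    have hxb₁ : x - b₁ ≠ 0 := sub_ne_zero.2 (Ne.symm hb₁ne)
    obtain ⟨j, -, hj⟩ := Finset.exists_mem_eq_sup (Finset.univ : Finset (Fin n))
      Finset.univ_nonempty (fun i => A.valuation ((x - b₁) i))
    set t := (x - b₁) j with ht_def
    have hvt : A.valuation t = vnrm A (x - b₁) := by
      rw [RisoAux.vnrm_def]
      exact hj.symm
    have hvt0 : A.valuation t ≠ 0 := by
      rw [hvt]
      exact (RisoAux.vnrm_pos A hxb₁).ne'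
    have htne : t ≠ 0 := fun h => hvt0 (by rw [h, map_zero])
    set x' := x - t • v with hx'_def
    have hsub : x - x' = t • v := by rw [hx'_def]; abel
    have hx'B : x' ∈ B := by
      refine hB.2 x hxB2 b₁ hb₁B x' ?_
      rw [hsub, RisoAux.vnrm_smul, hvnrm, mul_one, hvt]
    have hxx'V : x - x' ∈ V := by rw [hsub]; exact V.smul_mem t hvV
    have hxne : x ≠ x' := by
      intro h
      rw [h, sub_self] at hsub
      exact smul_ne_zero htne hv0 hsub.symm
    have hφ'x'X : φ' x' ∈ X :=
      (hφ'inv x hxB2 x' hx'B hxx'V).1 (by rw [hφ'x]; exact hx₀.1)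
    have hφ'x'B : φ' x' ∈ B := hφ'riso.1.1 hx'B
    have hriso := hφ'riso.2 x hxB2 x' hx'B hxne
    rw [hsub] at hriso
    have hvtv : vnrm A (t • v) = A.valuation t := by
      rw [RisoAux.vnrm_smul, hvnrm, mul_one]
    have hnorm : vnrm A (φ' x - φ' x') = A.valuation t := by
      rw [← hvtv]
      exact RisoAux.vnrm_isosceles A hriso
    obtain ⟨w, hwW, hrv⟩ := hdir (φ' x) hφ'xX (φ' x') ⟨hφ'x'X, hφ'x'B⟩
    have hclose : vnrm A (w - t • v) < A.valuation t := by
      rcases hrv with h | h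
      · rw [← h, ← hvtv]
        exact hriso
      · have h2 : w - t • v = (w - (φ' x - φ' x')) + (φ' x - φ' x' - t • v) := by
          abel
        rw [h2]
        refine lt_of_le_of_lt (RisoAux.vnrm_add_le A _ _) (max_lt ?_ ?_)
        · rw [hnorm] at h
          exact h
        · rw [hvtv] at hriso
          exact hriso
    set u := t⁻¹ • w with hu_def
    have huW : u ∈ W := W.smul_mem _ hwW
    have hvu : vnrm A (v - u) < 1 := by
      have h1 : v - u = t⁻¹ • (t • v - w) := by
        rw [hu_def, smul_sub, smul_smul, inv_mul_cancel₀ htne, one_smul]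
      rw [h1, RisoAux.vnrm_smul, map_inv₀]
      have h2 : vnrm A (t • v - w) < A.valuation t := by
        rw [RisoAux.vnrm_sub_rev]
        exact hclose
      have h3 := (mul_lt_mul_iff_right₀ (zero_lt_iff.2 (inv_ne_zero hvt0))).2 h2
      rwa [inv_mul_cancel₀ hvt0] at h3
    have huint : ∀ i, u i ∈ A := by
      refine (RisoAux.vnrm_le_one_iff A).1 ?_
      have h1 : u = v - (v - u) := by abel
      rw [h1]
      exact le_trans (RisoAux.vnrm_sub_le A _ _) (max_le hvnrm.le hvu.le)
    have hres : resVec A v = resVec A u := RisoAux.resVec_eq_of_close A hvint huint hvu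
    have hgoal : vb ∈ (Wbar : Set _) := by
      rw [← hW]
      exact ⟨u, huW, huint, by rw [← hres, hvres]⟩
    exact hgoal
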